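/- Let u ∈ H¹((0,1)^d) and suppose u has a well-defined trace on a compact (d−1)-dimensional Lipschitz submanifold Λ ⊂ (0,1)^d with the trace estimate ‖u‖_{L²(Λ̂)} ≤ C(‖u‖_{L²_{−α}(T̂)} + ‖∇u‖_{L²_{−α}(T̂)}) on the reference element T̂ ⊃ Λ̂. If A_T(x̂) = H x̂ + b maps T̂ onto T with c H d_{Λ̂}(x̂) ≤ d_Λ(A_T(x̂)) ≤ C H d_{Λ̂}(x̂), then for u ∈ H¹_{−α}(T), ‖u‖_{L²(Λ)} ≤ C' H^{ℓ/2} H^{−d/2} H^{α} (‖u‖_{L²_{−α}(T)} + H ‖∇u‖_{L²_{−α}(T)}), where |Λ| ≈ H^ℓ. -/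

import Mathlib

/-!
Under `A x = H • x + b` every quantity in the trace estimate scales exactly: the
`ℓ`-dimensional Hausdorff measure by `H ^ ℓ`, Lebesgue measure by `H ^ d`, the distance to
`Λ` by `H` (so the weight by `H ^ (2α)`), and the gradient of `u ∘ A` by `H`. Substituting
these identities into the reference-element estimate gives the bound with `C' = Cref`.
-/

open MeasureTheory
open scoped ENNReal NNReal

theorem MeasurableEmbedding.setIntegral_comp_of_map_eq_smul {X F : Type*} [MeasurableSpace X]
    [NormedAddCommGroup F] [NormedSpace ℝ F] {e : X → X} (he : MeasurableEmbedding e)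
    {μ : Measure X} {k : ℝ≥0∞} (h : Measure.map e μ = k • μ) (f : X → F) (s : Set X) :
    ∫ x in s, f (e x) ∂μ = k.toReal • ∫ y in e '' s, f y ∂μ := by
  rw [← (MeasurePreserving.mk he.measurable h).setIntegral_image_emb he,
    Measure.restrict_smul, integral_smul_measure]

section Affine

variable {E : Type*} [NormedAddCommGroup E] [NormedSpace ℝ E]

theorem infDist_smul_add_image (H : ℝ) (b x : E) (s : Set E) :
    Metric.infDist (H • x + b) ((fun z => H • z + b) '' s) = |H| * Metric.infDist x s := by
  rcases eq_or_ne H 0 with rfl | hH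
  · rcases s.eq_empty_or_nonempty with rfl | hs <;> simp [*]
  rw [show (fun z : E => H • z + b) = (· + b) ∘ (H • ·) from rfl, Set.image_comp,
    Set.image_smul, Metric.infDist_image (isometry_add_right b), infDist_smul₀ hH,
    Real.norm_eq_abs]

variable [MeasurableSpace E] [BorelSpace E]

theorem measurableEmbedding_smul_add {H : ℝ} (hH : H ≠ 0) (b : E) :
    MeasurableEmbedding fun x : E => H • x + b :=
  (measurableEmbedding_addRight b).comp (measurableEmbedding_const_smul₀ hH)

theorem map_smul_add_addHaar [FiniteDimensional ℝ E] (μ : Measure E) [μ.IsAddHaarMeasure]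
    {H : ℝ} (hH : H ≠ 0) (b : E) :
    Measure.map (fun x => H • x + b) μ = ENNReal.ofReal |H ^ Module.finrank ℝ E|⁻¹ • μ := by
  rw [show (fun x : E => H • x + b) = (· + b) ∘ (H • ·) from rfl,
    ← Measure.map_map (measurable_add_const b) (measurable_const_smul H),
    Measure.map_addHaar_smul μ hH, Measure.map_smul, map_add_right_eq_self, abs_inv]

theorem map_smul_add_hausdorffMeasure {d : ℝ} (hd : 0 ≤ d) {H : ℝ} (hH : H ≠ 0) (b : E) :
    Measure.map (fun x => H • x + b) μH[d] = (‖H‖₊⁻¹ ^ d : ℝ≥0) • μH[d] := by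
  have hhom : (H • · : E → E) = AffineMap.homothety 0 H := by
    funext x; simp [AffineMap.homothety_apply]
  rw [show (fun x : E => H • x + b) = (· + b) ∘ (H • ·) from rfl,
    ← Measure.map_map (measurable_add_const b) (measurable_const_smul H), hhom,
    map_homothety_hausdorffMeasure hd 0 hH, Measure.map_smul]
  exact congrArg _ ((IsometryEquiv.addRight b).map_hausdorffMeasure d)

theorem setIntegral_comp_smul_add_hausdorffMeasure {d : ℝ} (hd : 0 ≤ d) {H : ℝ} (hH : 0 < H)
    (b : E) (g : E → ℝ) (s : Set E) :
    ∫ x in s, g (H • x + b) ∂μH[d] = H ^ (-d) * ∫ y in (fun x => H • x + b) '' s, g y ∂μH[d] := by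
  rw [(measurableEmbedding_smul_add hH.ne' b).setIntegral_comp_of_map_eq_smul
    (map_smul_add_hausdorffMeasure hd hH.ne' b), ENNReal.coe_toReal, NNReal.coe_rpow,
    NNReal.coe_inv, coe_nnnorm, Real.norm_of_nonneg hH.le, Real.inv_rpow hH.le,
    Real.rpow_neg hH.le, smul_eq_mul]

theorem setIntegral_comp_smul_add_mul_infDist_rpow [FiniteDimensional ℝ E] (μ : Measure E)
    [μ.IsAddHaarMeasure] {H : ℝ} (hH : 0 < H) (b : E) (g : E → ℝ) (s t : Set E) (β : ℝ) :
    ∫ x in s, g (H • x + b) * Metric.infDist x t ^ (-β) ∂μ =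
      H ^ β * (H ^ (-(Module.finrank ℝ E : ℝ)) * ∫ y in (fun x => H • x + b) '' s,
        g y * Metric.infDist y ((fun x => H • x + b) '' t) ^ (-β) ∂μ) := by
  have hweight : ∀ x, g (H • x + b) * Metric.infDist x t ^ (-β) =
      H ^ β * (g (H • x + b) * Metric.infDist (H • x + b) ((fun x => H • x + b) '' t) ^ (-β)) := by
    intro x
    rw [infDist_smul_add_image, abs_of_pos hH, Real.mul_rpow hH.le Metric.infDist_nonneg,
      Real.rpow_neg hH.le β]
    field_simp
  simp_rw [hweight]
  rw [integral_const_mul, (measurableEmbedding_smul_add hH.ne' b).setIntegral_comp_of_map_eq_smul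
    (map_smul_add_addHaar μ hH.ne' b) (fun y => g y * Metric.infDist y _ ^ (-β)),
    ENNReal.toReal_ofReal (by positivity), abs_of_pos (by positivity), Real.rpow_neg hH.le,
    Real.rpow_natCast, smul_eq_mul]

end Affine

section Gradient

variable {F : Type*} [NormedAddCommGroup F] [InnerProductSpace ℝ F] [CompleteSpace F]

theorem norm_gradient_eq_norm_fderiv (f : F → ℝ) (x : F) :
    ‖gradient f x‖ = ‖fderiv ℝ f x‖ :=
  (InnerProductSpace.toDual ℝ F).symm.norm_map (fderiv ℝ f x)

theorem norm_gradient_comp_smul_add (u : F → ℝ) (H : ℝ) (b x : F) :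
    ‖gradient (fun y => u (H • y + b)) x‖ = |H| * ‖gradient u (H • x + b)‖ := by
  rw [norm_gradient_eq_norm_fderiv, norm_gradient_eq_norm_fderiv,
    fderiv_comp_smul (f := fun z => u (z + b)), fderiv_comp_add_right, norm_smul,
    Real.norm_eq_abs]

end Gradient

theorem Real.sqrt_rpow_mul {H : ℝ} (hH : 0 ≤ H) (t x : ℝ) :
    √(H ^ t * x) = H ^ (t / 2) * √x := by
  rw [Real.sqrt_mul (Real.rpow_nonneg hH t), Real.sqrt_eq_rpow, ← Real.rpow_mul hH]
  ring_nf

theorem stmt_16_general (d ℓ : ℕ) (α : ℝ)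
    (Tref Λref T Λ : Set (EuclideanSpace ℝ (Fin d)))
    (H : ℝ) (hH : 0 < H) (b : EuclideanSpace ℝ (Fin d))
    (hT : T = (fun x => H • x + b) '' Tref)
    (hΛ : Λ = (fun x => H • x + b) '' Λref)
    (Cref : ℝ) (hCref : 0 < Cref) :
    ∃ C' > 0, ∀ u : EuclideanSpace ℝ (Fin d) → ℝ,
      (Real.sqrt (∫ x in Λref, (u (H • x + b)) ^ 2 ∂(μH[(ℓ : ℝ)])) ≤
        Cref * (Real.sqrt (∫ x in Tref,
            (u (H • x + b)) ^ 2 * Metric.infDist x Λref ^ (-(2 * α))) +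
          Real.sqrt (∫ x in Tref,
            ‖gradient (fun y => u (H • y + b)) x‖ ^ 2 *
              Metric.infDist x Λref ^ (-(2 * α))))) →
      Real.sqrt (∫ x in Λ, (u x) ^ 2 ∂(μH[(ℓ : ℝ)])) ≤
        C' * H ^ ((ℓ : ℝ) / 2) * H ^ (-(d : ℝ) / 2) * H ^ α *
          (Real.sqrt (∫ x in T, (u x) ^ 2 * Metric.infDist x Λ ^ (-(2 * α))) +
            H * Real.sqrt (∫ x in T,
              ‖gradient u x‖ ^ 2 * Metric.infDist x Λ ^ (-(2 * α)))) := by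
  refine ⟨Cref, hCref, fun u hRef => ?_⟩
  have hΛint := setIntegral_comp_smul_add_hausdorffMeasure (Nat.cast_nonneg ℓ) hH b
    (fun y => u y ^ 2) Λref
  have hTint := setIntegral_comp_smul_add_mul_infDist_rpow volume hH b
    (fun y => u y ^ 2) Tref Λref (2 * α)
  have hTgrad := setIntegral_comp_smul_add_mul_infDist_rpow volume hH b
    (fun y => ‖gradient u y‖ ^ 2) Tref Λref (2 * α)
  have hchain : ∫ x in Tref, ‖gradient (fun y => u (H • y + b)) x‖ ^ 2 *
      Metric.infDist x Λref ^ (-(2 * α)) = H ^ 2 * ∫ x in Tref, ‖gradient u (H • x + b)‖ ^ 2 *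
      Metric.infDist x Λref ^ (-(2 * α)) := by
    simp_rw [norm_gradient_comp_smul_add, abs_of_pos hH, mul_pow, mul_assoc]
    exact integral_const_mul _ _
  rw [← hΛ] at hΛint
  rw [← hT, ← hΛ, finrank_euclideanSpace_fin] at hTint hTgrad
  calc √(∫ x in Λ, u x ^ 2 ∂μH[(ℓ : ℝ)])
      = H ^ ((ℓ : ℝ) / 2) * √(∫ x in Λref, u (H • x + b) ^ 2 ∂μH[(ℓ : ℝ)]) := by
        rw [hΛint, ← Real.sqrt_rpow_mul hH.le, ← mul_assoc, ← Real.rpow_add hH,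
          add_neg_cancel, Real.rpow_zero, one_mul]
    _ ≤ H ^ ((ℓ : ℝ) / 2) * (Cref * (√(∫ x in Tref,
            u (H • x + b) ^ 2 * Metric.infDist x Λref ^ (-(2 * α))) +
          √(∫ x in Tref, ‖gradient (fun y => u (H • y + b)) x‖ ^ 2 *
            Metric.infDist x Λref ^ (-(2 * α))))) := by gcongr
    _ = _ := by
        rw [hchain, hTint, hTgrad, Real.sqrt_mul (sq_nonneg H), Real.sqrt_sq hH.le]
        simp_rw [Real.sqrt_rpow_mul hH.le, mul_div_cancel_left₀ α two_ne_zero]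
        ring

/-- Scaled weighted trace inequality: if the affine map `A_T(x̂) = H x̂ + b`
maps the reference element `Tref ⊃ Λref` onto `T ⊃ Λ` with comparable scaling of
the distance functions, `|Λ| ≈ H^ℓ`, and the reference-element trace estimate
holds for `û = u ∘ A_T`, then
`‖u‖_{L²(Λ)} ≤ C' H^{ℓ/2} H^{−d/2} H^{α} (‖u‖_{L²_{−α}(T)} + H ‖∇u‖_{L²_{−α}(T)})`. -/
theorem stmt_16 (d ℓ : ℕ) (hℓd : ℓ < d) (α : ℝ)
    (Tref Λref T Λ : Set (EuclideanSpace ℝ (Fin d)))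
    (hΛT : Λref ⊆ Tref) (hcomp : IsCompact Λref)
    (H : ℝ) (hH : 0 < H) (b : EuclideanSpace ℝ (Fin d))
    (hT : T = (fun x => H • x + b) '' Tref)
    (hΛ : Λ = (fun x => H • x + b) '' Λref)
    (c C Cref CΛ : ℝ) (hc : 0 < c) (hC : 0 < C) (hCref : 0 < Cref) (hCΛ : 0 < CΛ)
    (hvol : (μH[(ℓ : ℝ)] Λ).toReal ≤ CΛ * H ^ (ℓ : ℝ))
    (hdist : ∀ x ∈ Tref,
      c * H * Metric.infDist x Λref ≤ Metric.infDist (H • x + b) Λ ∧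
      Metric.infDist (H • x + b) Λ ≤ C * H * Metric.infDist x Λref) :
    ∃ C' > 0, ∀ u : EuclideanSpace ℝ (Fin d) → ℝ,
      (Real.sqrt (∫ x in Λref, (u (H • x + b)) ^ 2 ∂(μH[(ℓ : ℝ)])) ≤
        Cref * (Real.sqrt (∫ x in Tref,
            (u (H • x + b)) ^ 2 * Metric.infDist x Λref ^ (-(2 * α))) +
          Real.sqrt (∫ x in Tref,
            ‖gradient (fun y => u (H • y + b)) x‖ ^ 2 *
              Metric.infDist x Λref ^ (-(2 * α))))) →
      Real.sqrt (∫ x in Λ, (u x) ^ 2 ∂(μH[(ℓ : ℝ)])) ≤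
        C' * H ^ ((ℓ : ℝ) / 2) * H ^ (-(d : ℝ) / 2) * H ^ α *
          (Real.sqrt (∫ x in T, (u x) ^ 2 * Metric.infDist x Λ ^ (-(2 * α))) +
            H * Real.sqrt (∫ x in T,
              ‖gradient u x‖ ^ 2 * Metric.infDist x Λ ^ (-(2 * α)))) :=
  stmt_16_general d ℓ α Tref Λref T Λ H hH b hT hΛ Cref hCref
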